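/- arXiv:1907.01259 — 3 statements merged into one kernel-verified Lean document; each statement's English description precedes it below -/
import Mathlib

section
/- Let X be a pure finite n-dimensional simplicial complex and let G be a finite group of simplicial automorphisms of X whose action is transitive on the set X(n) of n-dimensional faces. Then for every 0 ≤ k ≤ n−1, if the k-th cone radius Crad_k(X) is finite, then Exp^k_b(X) ≥ 1 / (C(n+1,k+1) · Crad_k(X)), where C(n+1,k+1) is the binomial coefficient. -/
open Finset

/-- A finite simplicial complex on vertex type `V`. -/
structure SCplx (V : Type) [DecidableEq V] where
  faces : Finset (Finset V)
  empty_mem : ∅ ∈ faces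
  down_closed : ∀ σ ∈ faces, ∀ τ ⊆ σ, τ ∈ faces

namespace SCplx

variable {V : Type} [DecidableEq V]

/-- Faces of cardinality `m`, i.e. the faces in `X(m-1)`. -/
def cfaces (X : SCplx V) (m : ℕ) : Finset (Finset V) :=
  X.faces.filter fun σ => σ.card = m

/-- `X` is pure `n`-dimensional. -/
def Pure (X : SCplx V) (n : ℕ) : Prop :=
  ∀ σ ∈ X.faces, ∃ τ ∈ X.cfaces (n + 1), σ ⊆ τ

/-- a chain/cochain of grade `m`: supported on faces of cardinality `m`. -/
def IsGraded (X : SCplx V) (m : ℕ) (c : Finset V → ZMod 2) : Prop :=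
  ∀ σ, c σ ≠ 0 → σ ∈ X.cfaces m

/-- boundary map (all degrees simultaneously, with the reduced convention `∂₀{v} = ∅`). -/
def bdry (X : SCplx V) (c : Finset V → ZMod 2) : Finset V → ZMod 2 := fun τ =>
  ∑ σ ∈ X.faces.filter (fun σ => τ ⊆ σ ∧ σ.card = τ.card + 1), c σ

/-- coboundary map (all degrees simultaneously). -/
def cobdry (X : SCplx V) (c : Finset V → ZMod 2) : Finset V → ZMod 2 := fun σ =>
  if σ ∈ X.faces then ∑ τ ∈ X.faces.filter (fun τ => τ ⊆ σ ∧ τ.card + 1 = σ.card), c τ else 0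

/-- support of a chain/cochain. -/
def supp (X : SCplx V) (c : Finset V → ZMod 2) : Finset (Finset V) :=
  X.faces.filter fun σ => c σ ≠ 0

/-- the size `|A|` of a chain. -/
def chainCard (X : SCplx V) (c : Finset V → ZMod 2) : ℕ := (X.supp c).card

/-- the chain consisting of a single simplex. -/
def sChain (τ : Finset V) : Finset V → ZMod 2 := fun σ => if σ = τ then 1 else 0

/-- the weight `w(τ)` in a pure `n`-dimensional complex. -/
noncomputable def w (X : SCplx V) (n : ℕ) (τ : Finset V) : ℝ :=
  (((X.cfaces (n + 1)).filter fun σ => τ ⊆ σ).card : ℝ) /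
    (((n + 1).choose τ.card : ℝ) * ((X.cfaces (n + 1)).card : ℝ))

/-- the weight `w(φ)` of a cochain. -/
noncomputable def wC (X : SCplx V) (n : ℕ) (c : Finset V → ZMod 2) : ℝ :=
  ∑ τ ∈ X.supp c, X.w n τ

/-- `φ ∈ B^k(X)`, i.e. `φ` is in the image of `d_{k-1}` on `C^{k-1}(X)`. -/
def IsCoboundary (X : SCplx V) (k : ℕ) (φ : Finset V → ZMod 2) : Prop :=
  ∃ ψ, X.IsGraded k ψ ∧ φ = X.cobdry ψ

/-- evaluation `φ(A)` of a cochain on a chain. -/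
def pair (X : SCplx V) (φ c : Finset V → ZMod 2) : ZMod 2 :=
  ∑ τ ∈ X.faces, φ τ * c τ

/-- A cone function for dimensions `-1,…,K-1` (i.e. a `(K-1)`-cone function)
with apex `v`; chains of dimension `j` are represented in grade (cardinality) `j+1`. -/
structure ConeFun (X : SCplx V) (K : ℕ) (v : V) where
  toFun : (Finset V → ZMod 2) → (Finset V → ZMod 2)
  map_add : ∀ c₁ c₂, toFun (c₁ + c₂) = toFun c₁ + toFun c₂
  graded : ∀ m ≤ K, ∀ c, X.IsGraded m c → X.IsGraded (m + 1) (toFun c)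
  apex : toFun (sChain ∅) = sChain {v}
  cone_eq : ∀ m, 1 ≤ m → m ≤ K → ∀ c, X.IsGraded m c →
    X.bdry (toFun c) = c + toFun (X.bdry c)

/-- the volume of a cone function. -/
def ConeFun.Vol {X : SCplx V} {K : ℕ} {v : V} (C : ConeFun X K v) : ℕ :=
  (X.cfaces K).sup fun τ => X.chainCard (C.toFun (sChain τ))

/-- the cone radius `Crad_{K-1}(X)`. -/
noncomputable def Crad (X : SCplx V) (K : ℕ) : ℕ∞ :=
  ⨅ (v : V) (C : ConeFun X K v), (C.Vol : ℕ∞)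

/-- push-forward of chains along a permutation of the vertices. -/
def pushChain (e : Equiv.Perm V) (c : Finset V → ZMod 2) : Finset V → ZMod 2 :=
  fun σ => c (σ.image e.symm)

/-- the action `ρ(g).f` of a group element on a cone function (on the level of raw maps). -/
def coneAct {G : Type*} [Group G] (ρ : G →* Equiv.Perm V) (g : G)
    (f : (Finset V → ZMod 2) → (Finset V → ZMod 2)) :
    (Finset V → ZMod 2) → (Finset V → ZMod 2) :=
  fun c => pushChain (ρ g) (f (pushChain (ρ g⁻¹) c))

/-- `c ∈ Z_k(X)` : a cycle of dimension `k` (grade `k+1`). -/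
def IsCycle (X : SCplx V) (k : ℕ) (c : Finset V → ZMod 2) : Prop :=
  X.IsGraded (k + 1) c ∧ X.bdry c = 0

/-- `c ∈ B_k(X)` : a boundary of dimension `k` (grade `k+1`). -/
def IsBdryChain (X : SCplx V) (k : ℕ) (c : Finset V → ZMod 2) : Prop :=
  ∃ a, X.IsGraded (k + 2) a ∧ X.bdry a = c

/-- the size of the smallest `k`-systole. -/
noncomputable def Sys (X : SCplx V) (k : ℕ) : ℕ∞ :=
  ⨅ (c : {c : Finset V → ZMod 2 // X.IsCycle k c ∧ ¬X.IsBdryChain k c}),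
    (X.chainCard c.1 : ℕ∞)

/-- `Fill_k(B)` : the size of the smallest filling of the cycle `B`. -/
noncomputable def FillB (X : SCplx V) (k : ℕ) (B : Finset V → ZMod 2) : ℕ∞ :=
  ⨅ (a : {a : Finset V → ZMod 2 // X.IsGraded (k + 2) a ∧ X.bdry a = B}),
    (X.chainCard a.1 : ℕ∞)

/-- `Fill_k(M)` : the filling function. -/
noncomputable def Fill (X : SCplx V) (k : ℕ) (M : ℕ∞) : ℕ∞ :=
  ⨆ (B : {B : Finset V → ZMod 2 // X.IsCycle k B ∧ (X.chainCard B : ℕ∞) ≤ M}),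
    X.FillB k B.1

/-- the constants `M_{k-1}` of Proposition `filling constants prop` (index shifted by one:
`Mconst X (k+1) = M_k`). -/
noncomputable def Mconst (X : SCplx V) : ℕ → ℕ∞
  | 0 => 1
  | (j + 1) => X.Fill j (((j : ℕ∞) + 1) * X.Mconst j + 1)

end SCplx

/-!
Fix a cone function `Cone` of volume `D`. For a `k`-cochain `φ`, the homotopy formula
`φ + d(φ ∘ Cone) = (dφ) ∘ Cone` on `k`-faces puts `φ` within weight
`∑_τ w(τ) |supp Cone(τ) ∩ supp dφ|` of a coboundary. Averaging this over the conjugate cones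
`g • Cone`, `g ∈ G`, and using transitivity on top faces, a fixed face is moved into `supp dφ`
by at most a fraction `|B| / |X(n)|` of the group, where `B` is the set of top faces containing
a face of `supp dφ`; so the distance of `φ` to `B^k(X)` is at most `D |B| / |X(n)|`.
Finally `d(dφ) = 0` forces each top face in `B` to contain at least `n - k` faces of `supp dφ`,
and double counting gives `(k + 2) |B| ≤ C(n+1,k+1) |X(n)| w(dφ)`.
-/

namespace SCplx

variable {V : Type} [DecidableEq V] {X : SCplx V} {e : Equiv.Perm V}

theorem mem_cfaces {σ : Finset V} {m : ℕ} : σ ∈ X.cfaces m ↔ σ ∈ X.faces ∧ σ.card = m :=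
  mem_filter

theorem IsGraded.apply_eq_zero {m : ℕ} {c : Finset V → ZMod 2} (hc : X.IsGraded m c)
    {σ : Finset V} (hσ : σ ∉ X.cfaces m) : c σ = 0 :=
  not_not.mp fun h => hσ (hc σ h)

theorem IsGraded.add {m : ℕ} {a b : Finset V → ZMod 2} (ha : X.IsGraded m a)
    (hb : X.IsGraded m b) : X.IsGraded m (a + b) := fun σ hσ => by
  by_contra h
  simp [ha.apply_eq_zero h, hb.apply_eq_zero h] at hσ

theorem mem_faces_of_cobdry_ne_zero {φ : Finset V → ZMod 2} {σ : Finset V}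
    (h : X.cobdry φ σ ≠ 0) : σ ∈ X.faces := by
  by_contra hσ
  simp [cobdry, hσ] at h

theorem filter_codim_one_eq_image_erase {σ : Finset V} (hσ : σ ∈ X.faces) :
    X.faces.filter (fun τ => τ ⊆ σ ∧ τ.card + 1 = σ.card) = σ.image σ.erase := by
  ext τ
  simp only [mem_filter, mem_image]
  constructor
  · rintro ⟨-, hτ⟩
    obtain ⟨x, hx, rfl⟩ := exists_eq_insert_iff.mpr hτ
    exact ⟨x, mem_insert_self x τ, erase_insert hx⟩
  · rintro ⟨x, hx, rfl⟩
    exact ⟨X.down_closed σ hσ _ (erase_subset x σ), erase_subset x σ, card_erase_add_one hx⟩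

theorem cobdry_apply_of_mem (φ : Finset V → ZMod 2) {σ : Finset V} (hσ : σ ∈ X.faces) :
    X.cobdry φ σ = ∑ x ∈ σ, φ (σ.erase x) := by
  rw [cobdry, if_pos hσ, filter_codim_one_eq_image_erase hσ, sum_image (erase_injOn σ)]

theorem IsGraded.cobdry {m : ℕ} {φ : Finset V → ZMod 2} (hφ : X.IsGraded m φ) :
    X.IsGraded (m + 1) (X.cobdry φ) := fun σ hσ => by
  have hσf := mem_faces_of_cobdry_ne_zero hσ
  rw [cobdry_apply_of_mem φ hσf] at hσ
  obtain ⟨x, hx, hφx⟩ := exists_ne_zero_of_sum_ne_zero hσ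
  have := card_erase_add_one hx
  have := (mem_cfaces.mp (hφ _ hφx)).2
  exact mem_cfaces.mpr ⟨hσf, by omega⟩

/-- The terms `φ((η - x) - y)` and `φ((η - y) - x)` cancel in characteristic two. -/
theorem cobdry_cobdry (φ : Finset V → ZMod 2) : X.cobdry (X.cobdry φ) = 0 := by
  funext η
  by_cases hη : η ∈ X.faces
  · rw [cobdry_apply_of_mem _ hη, Pi.zero_apply, Finset.sum_congr rfl fun x _ =>
      cobdry_apply_of_mem φ (X.down_closed η hη _ (erase_subset x η)),
      ← sum_finset_product' η.offDiag η (fun x => η.erase x) (by simp [and_comm, eq_comm])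
        (f := fun x y => φ ((η.erase x).erase y))]
    refine sum_involution (fun p _ => p.swap) (fun p _ => ?_) (fun p hp _ => ?_)
      (fun p hp => by simp only [mem_offDiag] at hp ⊢; tauto) (fun p _ => p.swap_swap)
    · rw [Prod.fst_swap, Prod.snd_swap, erase_right_comm, CharTwo.add_self_eq_zero]
    · simpa [Prod.ext_iff, eq_comm] using (mem_offDiag.mp hp).2.2
  · simp [SCplx.cobdry, hη]

theorem pair_add (φ a b : Finset V → ZMod 2) :
    X.pair φ (a + b) = X.pair φ a + X.pair φ b := by
  simp only [pair, Pi.add_apply, mul_add, sum_add_distrib]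

theorem pair_sum {ι : Type*} (φ : Finset V → ZMod 2) (s : Finset ι)
    (c : ι → Finset V → ZMod 2) : X.pair φ (∑ i ∈ s, c i) = ∑ i ∈ s, X.pair φ (c i) := by
  simp only [pair, Finset.sum_apply, mul_sum]
  exact sum_comm

theorem pair_sChain (φ : Finset V → ZMod 2) {τ : Finset V} (hτ : τ ∈ X.faces) :
    X.pair φ (sChain τ) = φ τ := by
  simp [pair, sChain, hτ]

theorem pair_bdry (φ c : Finset V → ZMod 2) :
    X.pair φ (X.bdry c) = X.pair (X.cobdry φ) c := by
  have hcobdry : X.pair (X.cobdry φ) c = ∑ σ ∈ X.faces,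
      ∑ τ ∈ X.faces.filter (fun τ => τ ⊆ σ ∧ τ.card + 1 = σ.card), φ τ * c σ :=
    sum_congr rfl fun σ hσ => by rw [cobdry, if_pos hσ, sum_mul]
  rw [hcobdry, pair]
  simp only [bdry, mul_sum]
  exact sum_comm' fun τ σ => by simp only [mem_filter, eq_comm (a := σ.card)]; tauto

theorem exists_mem_supp_of_pair_ne_zero {φ c : Finset V → ZMod 2} (h : X.pair φ c ≠ 0) :
    (X.supp c ∩ X.supp φ).Nonempty := by
  obtain ⟨σ, hσ, hφc⟩ := exists_ne_zero_of_sum_ne_zero h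
  exact ⟨σ, by simp_all [supp]⟩

theorem bdry_sChain {τ : Finset V} (hτ : τ ∈ X.faces) :
    X.bdry (sChain τ) =
      ∑ α ∈ X.faces.filter (fun α => α ⊆ τ ∧ α.card + 1 = τ.card), sChain α := by
  funext β
  simp only [bdry, sChain, Finset.sum_apply, sum_ite_eq', sum_ite_eq, mem_filter]
  refine if_congr ?_ rfl rfl
  constructor
  · rintro ⟨-, hβτ, hcard⟩
    exact ⟨X.down_closed τ hτ β hβτ, hβτ, hcard.symm⟩
  · rintro ⟨-, hβτ, hcard⟩
    exact ⟨hτ, hβτ, hcard.symm⟩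

/-- For `y ∈ F \ ρ₀`, the vanishing of `d(dφ)` on `insert y ρ₀` makes `dφ` non-zero on some
`(insert y ρ₀).erase x` with `x ∈ ρ₀`; distinct `y` give distinct such faces. -/
theorem card_sdiff_add_one_le_card_filter_supp_cobdry (φ : Finset V → ZMod 2)
    {F ρ₀ : Finset V} (hF : F ∈ X.faces) (hρ₀F : ρ₀ ⊆ F) (hρ₀ : X.cobdry φ ρ₀ ≠ 0) :
    (F \ ρ₀).card + 1 ≤ ((X.supp (X.cobdry φ)).filter (· ⊆ F)).card := by
  have hflip : ∀ y ∈ F \ ρ₀, ∃ x ∈ ρ₀, X.cobdry φ ((insert y ρ₀).erase x) ≠ 0 := by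
    intro y hy
    rw [mem_sdiff] at hy
    have hη : insert y ρ₀ ∈ X.faces := X.down_closed F hF _ (insert_subset hy.1 hρ₀F)
    have hdd := congrFun (cobdry_cobdry (X := X) φ) (insert y ρ₀)
    rw [cobdry_apply_of_mem _ hη, sum_insert hy.2, erase_insert hy.2, Pi.zero_apply] at hdd
    refine exists_ne_zero_of_sum_ne_zero ?_
    rwa [← neg_eq_of_add_eq_zero_right hdd, neg_ne_zero]
  choose! x hxρ₀ hx using hflip
  have hy_mem : ∀ y ∈ F \ ρ₀, y ∈ (insert y ρ₀).erase (x y) := fun y hy =>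
    mem_erase.mpr ⟨fun h => (mem_sdiff.mp hy).2 (h ▸ hxρ₀ y hy), mem_insert_self y ρ₀⟩
  have hρ₀mem : ρ₀ ∈ (X.supp (X.cobdry φ)).filter (· ⊆ F) :=
    mem_filter.mpr ⟨mem_filter.mpr ⟨mem_faces_of_cobdry_ne_zero hρ₀, hρ₀⟩, hρ₀F⟩
  rw [← card_erase_add_one hρ₀mem, add_le_add_iff_right]
  refine card_le_card_of_injOn (fun y => (insert y ρ₀).erase (x y)) (fun y hy => ?_)
    (fun y hy y' hy' h => ?_)
  · have hyF := mem_sdiff.mp hy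
    refine mem_erase.mpr ⟨fun h => hyF.2 (h ▸ hy_mem y hy), mem_filter.mpr
      ⟨mem_filter.mpr ⟨mem_faces_of_cobdry_ne_zero (hx y hy), hx y hy⟩, ?_⟩⟩
    exact (erase_subset _ _).trans (insert_subset hyF.1 hρ₀F)
  · have hy' : y ∈ (insert y' ρ₀).erase (x y') := (congrArg (y ∈ ·) h).mp (hy_mem y hy)
    exact (mem_insert.mp (mem_of_mem_erase hy')).resolve_right (mem_sdiff.mp hy).2

def degree (X : SCplx V) (n : ℕ) (τ : Finset V) : ℕ :=
  ((X.cfaces (n + 1)).filter fun σ => τ ⊆ σ).card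

theorem w_nonneg (n : ℕ) (τ : Finset V) : 0 ≤ X.w n τ := by
  unfold w
  positivity

theorem wC_nonneg (n : ℕ) (c : Finset V → ZMod 2) : 0 ≤ X.wC n c :=
  sum_nonneg fun τ _ => w_nonneg n τ

theorem degree_eq_w_mul (n : ℕ) (τ : Finset V) :
    (X.degree n τ : ℝ) = X.w n τ * ((n + 1).choose τ.card * (X.cfaces (n + 1)).card) := by
  by_cases h : ((n + 1).choose τ.card : ℝ) * (X.cfaces (n + 1)).card = 0
  · rw [h, mul_zero, Nat.cast_eq_zero, degree, card_eq_zero, filter_eq_empty_iff]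
    intro F hF hτF
    rcases mul_eq_zero.mp h with h | h
    · rw [Nat.cast_eq_zero, Nat.choose_eq_zero_iff] at h
      have := card_le_card hτF
      rw [(mem_cfaces.mp hF).2] at this
      omega
    · rw [Nat.cast_eq_zero, card_eq_zero] at h
      simp [h] at hF
  · rw [w, div_mul_cancel₀ _ h]
    rfl

theorem card_filter_cfaces_subset {F : Finset V} (hF : F ∈ X.faces) (m : ℕ) :
    ((X.cfaces m).filter (· ⊆ F)).card = F.card.choose m := by
  rw [← card_powersetCard]
  congr 1
  ext τ
  simp only [mem_filter, mem_cfaces, mem_powersetCard]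
  exact ⟨fun ⟨⟨_, hc⟩, hs⟩ => ⟨hs, hc⟩, fun ⟨hs, hc⟩ => ⟨⟨X.down_closed F hF τ hs, hc⟩, hs⟩⟩

theorem sum_degree_eq_sum_card_filter (n : ℕ) (S : Finset (Finset V)) :
    ∑ τ ∈ S, X.degree n τ = ∑ F ∈ X.cfaces (n + 1), (S.filter (· ⊆ F)).card :=
  sum_card_bipartiteAbove_eq_sum_card_bipartiteBelow (s := S) (t := X.cfaces (n + 1))
    (fun τ F => τ ⊆ F)

theorem sum_w_cfaces_le_one (n m : ℕ) : ∑ τ ∈ X.cfaces m, X.w n τ ≤ 1 := by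
  set N := (X.cfaces (n + 1)).card
  have hw : ∀ τ ∈ X.cfaces m, X.w n τ = X.degree n τ / ((n + 1).choose m * N) :=
    fun τ hτ => by rw [w, (mem_cfaces.mp hτ).2]; rfl
  have hdeg : ∑ τ ∈ X.cfaces m, X.degree n τ = (n + 1).choose m * N := by
    rw [sum_degree_eq_sum_card_filter, sum_congr rfl fun F hF => by
      rw [card_filter_cfaces_subset (mem_cfaces.mp hF).1, (mem_cfaces.mp hF).2], sum_const,
      smul_eq_mul, mul_comm]
  rw [sum_congr rfl hw, ← sum_div, ← Nat.cast_sum, hdeg]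
  push_cast
  exact div_self_le_one _

def topStar (X : SCplx V) (n : ℕ) (S : Finset (Finset V)) : Finset (Finset V) :=
  (X.cfaces (n + 1)).filter fun F => ∃ σ ∈ S, σ ⊆ F

theorem sub_mul_card_topStar_supp_cobdry_le {n k : ℕ} {φ : Finset V → ZMod 2}
    (hφ : X.IsGraded (k + 1) φ) :
    (n - k) * (X.topStar n (X.supp (X.cobdry φ))).card ≤
      ∑ τ ∈ X.supp (X.cobdry φ), X.degree n τ := by
  set S := X.supp (X.cobdry φ)
  calc (n - k) * (X.topStar n S).card = ∑ _F ∈ X.topStar n S, (n - k) := by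
        rw [sum_const, smul_eq_mul, mul_comm]
    _ ≤ ∑ F ∈ X.topStar n S, (S.filter (· ⊆ F)).card := sum_le_sum fun F hF => ?_
    _ ≤ ∑ F ∈ X.cfaces (n + 1), (S.filter (· ⊆ F)).card :=
        sum_le_sum_of_subset (filter_subset _ _)
    _ = ∑ τ ∈ S, X.degree n τ := (sum_degree_eq_sum_card_filter n S).symm
  obtain ⟨hF, ρ₀, hρ₀S, hρ₀F⟩ := mem_filter.mp hF
  have hρ₀ := (mem_filter.mp hρ₀S).2
  have hsimplex : (F \ ρ₀).card + 1 ≤ (S.filter (· ⊆ F)).card :=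
    card_sdiff_add_one_le_card_filter_supp_cobdry φ (mem_cfaces.mp hF).1 hρ₀F hρ₀
  rw [card_sdiff_of_subset hρ₀F, (mem_cfaces.mp hF).2, (mem_cfaces.mp (hφ.cobdry ρ₀ hρ₀)).2]
    at hsimplex
  omega

theorem mul_card_topStar_supp_cobdry_le {n k : ℕ} (hk : k < n) {φ : Finset V → ZMod 2}
    (hφ : X.IsGraded (k + 1) φ) :
    ((k + 2) * (X.topStar n (X.supp (X.cobdry φ))).card : ℝ) ≤
      (n + 1).choose (k + 1) * (X.cfaces (n + 1)).card * X.wC n (X.cobdry φ) := by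
  set B := X.topStar n (X.supp (X.cobdry φ))
  set N := (X.cfaces (n + 1)).card
  have hdeg : (∑ τ ∈ X.supp (X.cobdry φ), X.degree n τ : ℝ) =
      (n + 1).choose (k + 2) * N * X.wC n (X.cobdry φ) := by
    rw [wC, mul_sum]
    refine sum_congr rfl fun τ hτ => ?_
    rw [degree_eq_w_mul, (mem_cfaces.mp (hφ.cobdry τ (mem_filter.mp hτ).2)).2]
    ring
  have hchoose :
      ((n + 1).choose (k + 2) * (k + 2) : ℝ) = (n + 1).choose (k + 1) * (n - k : ℕ) := by
    have := Nat.choose_succ_right_eq (n + 1) (k + 1)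
    rw [Nat.add_sub_add_right] at this
    exact_mod_cast this
  have hcover :
      ((n - k : ℕ) * B.card : ℝ) ≤ (n + 1).choose (k + 2) * N * X.wC n (X.cobdry φ) := by
    rw [← hdeg]
    exact_mod_cast sub_mul_card_topStar_supp_cobdry_le hφ
  refine le_of_mul_le_mul_left ?_ (Nat.cast_pos.mpr (Nat.sub_pos_of_lt hk) : (0 : ℝ) < (n - k : ℕ))
  calc ((n - k : ℕ) : ℝ) * ((k + 2) * B.card) = (k + 2) * ((n - k : ℕ) * B.card) := by ring
    _ ≤ (k + 2) * ((n + 1).choose (k + 2) * N * X.wC n (X.cobdry φ)) := by gcongr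
    _ = (n - k : ℕ) * ((n + 1).choose (k + 1) * N * X.wC n (X.cobdry φ)) := by
        rw [← mul_assoc, ← mul_assoc, mul_comm _ ((n + 1).choose (k + 2) : ℝ), hchoose]
        ring

def IsAut (X : SCplx V) (e : Equiv.Perm V) : Prop :=
  ∀ σ : Finset V, σ.image e ∈ X.faces ↔ σ ∈ X.faces

theorem isAut_of_forall_image_mem {G : Type*} [Group G] (ρ : G →* Equiv.Perm V)
    (hface : ∀ g : G, ∀ σ ∈ X.faces, σ.image (ρ g) ∈ X.faces) (g : G) : X.IsAut (ρ g) :=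
  fun σ => ⟨fun h => by simpa [image_image, Function.comp_def] using hface g⁻¹ _ h, hface g σ⟩

namespace IsAut

theorem symm (he : X.IsAut e) : X.IsAut e.symm := fun σ => by
  rw [← he, image_image, e.self_comp_symm, image_id]

theorem image_mem_cfaces_iff (he : X.IsAut e) {σ : Finset V} {m : ℕ} :
    σ.image e ∈ X.cfaces m ↔ σ ∈ X.cfaces m := by
  rw [mem_cfaces, mem_cfaces, he, card_image_of_injective _ e.injective]

theorem sum_faces_image (he : X.IsAut e) {M : Type*} [AddCommMonoid M] (f : Finset V → M) :
    ∑ σ ∈ X.faces, f (σ.image e) = ∑ σ ∈ X.faces, f σ := by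
  refine sum_nbij' (·.image e) (·.image e.symm) (fun σ hσ => (he σ).mpr hσ)
    (fun σ hσ => (he.symm σ).mpr hσ) (fun σ _ => ?_) (fun σ _ => ?_) (fun σ _ => rfl) <;>
  simp [image_image]

theorem sum_cfaces_image (he : X.IsAut e) {M : Type*} [AddCommMonoid M] (m : ℕ)
    (f : Finset V → M) :
    ∑ σ ∈ X.cfaces m, f (σ.image e) = ∑ σ ∈ X.cfaces m, f σ := by
  simp only [cfaces, sum_filter]
  rw [← he.sum_faces_image fun σ => if σ.card = m then f σ else 0]
  simp only [card_image_of_injective _ e.injective]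

theorem w_image (he : X.IsAut e) (n : ℕ) (τ : Finset V) : X.w n (τ.image e) = X.w n τ := by
  have hdeg : X.degree n (τ.image e) = X.degree n τ := by
    simp only [degree, card_filter]
    rw [← he.sum_cfaces_image]
    simp only [image_subset_image_iff e.injective]
  change (X.degree n _ : ℝ) / _ = (X.degree n _ : ℝ) / _
  rw [hdeg, card_image_of_injective _ e.injective]

end IsAut

theorem pushChain_add (e : Equiv.Perm V) (a b : Finset V → ZMod 2) :
    pushChain e (a + b) = pushChain e a + pushChain e b :=
  rfl

theorem pushChain_pushChain_symm (e : Equiv.Perm V) (c : Finset V → ZMod 2) :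
    pushChain e (pushChain e.symm c) = c := by
  funext σ
  simp [pushChain, image_image]

theorem pushChain_sChain (e : Equiv.Perm V) (τ : Finset V) :
    pushChain e (sChain τ) = sChain (τ.image e) := by
  funext σ
  have hiff : σ.image e.symm = τ ↔ σ = τ.image e :=
    ⟨by rintro rfl; simp [image_image], by rintro rfl; simp [image_image]⟩
  simp only [pushChain, sChain, hiff]

theorem IsGraded.pushChain {m : ℕ} {c : Finset V → ZMod 2} (hc : X.IsGraded m c)
    (he : X.IsAut e) : X.IsGraded m (pushChain e c) :=
  fun _ hσ => he.symm.image_mem_cfaces_iff.mp (hc _ hσ)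

theorem IsAut.bdry_pushChain (he : X.IsAut e) (c : Finset V → ZMod 2) :
    X.bdry (pushChain e c) = pushChain e (X.bdry c) := by
  funext τ
  simp only [bdry, pushChain, sum_filter]
  rw [← he.symm.sum_faces_image fun σ =>
    if τ.image e.symm ⊆ σ ∧ σ.card = (τ.image e.symm).card + 1 then c σ else 0]
  simp only [image_subset_image_iff e.symm.injective,
    card_image_of_injective _ e.symm.injective]

theorem IsAut.supp_pushChain (he : X.IsAut e) (c : Finset V → ZMod 2) :
    X.supp (pushChain e c) = (X.supp c).image (·.image e) := by
  ext σ
  simp only [supp, mem_filter, mem_image]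
  unfold pushChain
  constructor
  · rintro ⟨hσ, hc⟩
    exact ⟨σ.image e.symm, ⟨(he.symm σ).mpr hσ, hc⟩, by simp [image_image]⟩
  · rintro ⟨τ, ⟨hτ, hc⟩, rfl⟩
    exact ⟨(he τ).mpr hτ, by simpa [image_image] using hc⟩

theorem IsAut.card_filter_supp_pushChain (he : X.IsAut e) (c : Finset V → ZMod 2)
    (p : Finset V → Prop) [DecidablePred p] :
    ((X.supp (pushChain e c)).filter p).card =
      ((X.supp c).filter fun σ => p (σ.image e)).card := by
  rw [he.supp_pushChain, filter_image, card_image_of_injective _ (image_injective e.injective)]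

def ConeFun.conj {K : ℕ} {v : V} (C : ConeFun X K v) (he : X.IsAut e) :
    ConeFun X K (e v) where
  toFun c := pushChain e (C.toFun (pushChain e.symm c))
  map_add c₁ c₂ := by simp only [pushChain_add, C.map_add]
  graded m hm c hc := (C.graded m hm _ (hc.pushChain he.symm)).pushChain he
  apex := by rw [pushChain_sChain, image_empty, C.apex, pushChain_sChain, image_singleton]
  cone_eq m hm₁ hm₂ c hc := by
    rw [he.bdry_pushChain, C.cone_eq m hm₁ hm₂ _ (hc.pushChain he.symm), pushChain_add,
      pushChain_pushChain_symm, he.symm.bdry_pushChain]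

theorem ConeFun.conj_apply_sChain_image {K : ℕ} {v : V} (C : ConeFun X K v) (he : X.IsAut e)
    (τ : Finset V) :
    (C.conj he).toFun (sChain (τ.image e)) = pushChain e (C.toFun (sChain τ)) := by
  change pushChain e (C.toFun (pushChain e.symm _)) = _
  rw [pushChain_sChain]
  simp [image_image]

theorem isGraded_sChain {m : ℕ} {τ : Finset V} (hτ : τ ∈ X.cfaces m) :
    X.IsGraded m (sChain τ) := fun σ hσ => by
  by_cases h : σ = τ
  · exact h ▸ hτ
  · simp [sChain, h] at hσ

theorem ConeFun.map_sum {K : ℕ} {v : V} (C : ConeFun X K v) {ι : Type*} (s : Finset ι)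
    (c : ι → Finset V → ZMod 2) : C.toFun (∑ i ∈ s, c i) = ∑ i ∈ s, C.toFun (c i) :=
  _root_.map_sum (AddMonoidHom.mk' C.toFun C.map_add) c s

def coneCochain (X : SCplx V) (f : (Finset V → ZMod 2) → Finset V → ZMod 2)
    (φ : Finset V → ZMod 2) (m : ℕ) : Finset V → ZMod 2 :=
  fun α => if α ∈ X.cfaces m then X.pair φ (f (sChain α)) else 0

theorem isGraded_coneCochain (f : (Finset V → ZMod 2) → Finset V → ZMod 2)
    (φ : Finset V → ZMod 2) (m : ℕ) : X.IsGraded m (X.coneCochain f φ m) :=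
  fun _ hα => by_contra fun h => hα (if_neg h)

theorem add_cobdry_coneCochain_apply {k : ℕ} {v : V} (C : ConeFun X (k + 1) v)
    (φ : Finset V → ZMod 2) {τ : Finset V} (hτ : τ ∈ X.cfaces (k + 1)) :
    (φ + X.cobdry (X.coneCochain C.toFun φ k)) τ =
      X.pair (X.cobdry φ) (C.toFun (sChain τ)) := by
  obtain ⟨hτf, hτc⟩ := mem_cfaces.mp hτ
  have hψ :
      X.cobdry (X.coneCochain C.toFun φ k) τ = X.pair φ (C.toFun (X.bdry (sChain τ))) := by
    rw [cobdry, if_pos hτf, bdry_sChain hτf, C.map_sum, pair_sum]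
    exact sum_congr rfl fun α hα => if_pos (mem_cfaces.mpr ⟨(mem_filter.mp hα).1, by
      have := (mem_filter.mp hα).2.2; omega⟩)
  rw [← pair_bdry, C.cone_eq (k + 1) (Nat.le_add_left 1 k) le_rfl _ (isGraded_sChain hτ),
    pair_add, pair_sChain _ hτf, Pi.add_apply, hψ]

theorem sInf_le_wC_add {n k : ℕ} {φ ψ : Finset V → ZMod 2} (hψ : X.IsCoboundary k ψ) :
    sInf {r : ℝ | ∃ ψ, X.IsCoboundary k ψ ∧ r = X.wC n (φ + ψ)} ≤ X.wC n (φ + ψ) :=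
  csInf_le ⟨0, by rintro _ ⟨_, -, rfl⟩; exact wC_nonneg n _⟩ ⟨ψ, hψ, rfl⟩

theorem sInf_le_sum_w_mul_card {n k : ℕ} {v : V} (C : ConeFun X (k + 1) v)
    {φ : Finset V → ZMod 2} (hφ : X.IsGraded (k + 1) φ) :
    sInf {r : ℝ | ∃ ψ, X.IsCoboundary k ψ ∧ r = X.wC n (φ + ψ)} ≤
      ∑ τ ∈ X.cfaces (k + 1), X.w n τ *
        ((X.supp (C.toFun (sChain τ))).filter (· ∈ X.supp (X.cobdry φ))).card := by
  set ψ := X.cobdry (X.coneCochain C.toFun φ k)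
  have hsupp : X.supp (φ + ψ) ⊆ (X.cfaces (k + 1)).filter
      fun τ => X.pair (X.cobdry φ) (C.toFun (sChain τ)) ≠ 0 := fun τ hτ => by
    have hτ' := (hφ.add (isGraded_coneCochain C.toFun φ k).cobdry) τ (mem_filter.mp hτ).2
    exact mem_filter.mpr ⟨hτ', add_cobdry_coneCochain_apply C φ hτ' ▸ (mem_filter.mp hτ).2⟩
  calc sInf _ ≤ X.wC n (φ + ψ) := sInf_le_wC_add ⟨_, isGraded_coneCochain C.toFun φ k, rfl⟩
    _ ≤ ∑ τ ∈ (X.cfaces (k + 1)).filter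
          (fun τ => X.pair (X.cobdry φ) (C.toFun (sChain τ)) ≠ 0), X.w n τ :=
        sum_le_sum_of_subset_of_nonneg hsupp fun τ _ _ => w_nonneg n τ
    _ ≤ _ := by
      rw [sum_filter]
      gcongr with τ
      split_ifs with h
      · refine le_mul_of_one_le_right (w_nonneg n τ) ?_
        rw [filter_mem_eq_inter]
        exact_mod_cast card_pos.mpr (exists_mem_supp_of_pair_ne_zero h)
      · exact mul_nonneg (w_nonneg n τ) (Nat.cast_nonneg _)

section GroupAction

theorem image_map_mul {G : Type} [Group G] (ρ : G →* Equiv.Perm V) (s : Finset V)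
    (g h : G) :
    s.image (ρ (g * h)) = (s.image (ρ h)).image (ρ g) := by
  rw [image_image, map_mul, Equiv.Perm.coe_mul]

variable {G : Type} [Group G] [Fintype G] (ρ : G →* Equiv.Perm V) {n : ℕ}

/-- The fibres of `g ↦ g • F₀` over the top faces are cosets of the stabiliser of `F₀`, so they
all have the same size. -/
theorem card_cfaces_mul_card_filter_image_eq
    (hface : ∀ g : G, ∀ σ ∈ X.faces, σ.image (ρ g) ∈ X.faces)
    (htrans : ∀ σ ∈ X.cfaces (n + 1), ∀ τ ∈ X.cfaces (n + 1), ∃ g : G, σ.image (ρ g) = τ)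
    {F₀ F : Finset V} (hF₀ : F₀ ∈ X.cfaces (n + 1)) (hF : F ∈ X.cfaces (n + 1)) :
    (X.cfaces (n + 1)).card * (univ.filter fun g : G => F₀.image (ρ g) = F).card =
      Fintype.card G := by
  have hconst : ∀ F' ∈ X.cfaces (n + 1), (univ.filter fun g : G => F₀.image (ρ g) = F').card =
      (univ.filter fun g : G => F₀.image (ρ g) = F).card := by
    intro F' hF'
    obtain ⟨h, rfl⟩ := htrans F hF F' hF'
    refine card_nbij' (h⁻¹ * ·) (h * ·) (fun g hg => ?_) (fun g hg => ?_) (fun g _ => by simp)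
      (fun g _ => by simp)
    · simp only [coe_filter, mem_univ, true_and, Set.mem_ofPred_eq] at hg ⊢
      rw [image_map_mul, hg, ← image_map_mul, inv_mul_cancel, map_one, Equiv.Perm.coe_one,
        image_id]
    · simp only [coe_filter, mem_univ, true_and, Set.mem_ofPred_eq] at hg ⊢
      rw [image_map_mul, hg]
  have hmaps : Set.MapsTo (fun g : G => F₀.image (ρ g)) (univ : Finset G) (X.cfaces (n + 1)) :=
    fun g _ =>
      (isAut_of_forall_image_mem ρ hface g).image_mem_cfaces_iff.mpr hF₀
  rw [← card_univ, card_eq_sum_card_fiberwise hmaps, sum_congr rfl hconst, sum_const, smul_eq_mul]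

theorem card_cfaces_mul_card_filter_image_mem
    (hface : ∀ g : G, ∀ σ ∈ X.faces, σ.image (ρ g) ∈ X.faces)
    (htrans : ∀ σ ∈ X.cfaces (n + 1), ∀ τ ∈ X.cfaces (n + 1), ∃ g : G, σ.image (ρ g) = τ)
    {F₀ : Finset V} (hF₀ : F₀ ∈ X.cfaces (n + 1)) {B : Finset (Finset V)}
    (hB : B ⊆ X.cfaces (n + 1)) :
    (X.cfaces (n + 1)).card * (univ.filter fun g : G => F₀.image (ρ g) ∈ B).card =
      Fintype.card G * B.card := by
  rw [card_eq_sum_card_fiberwise (f := fun g : G => F₀.image (ρ g))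
    (s := univ.filter fun g : G => F₀.image (ρ g) ∈ B) (t := B)
    fun g hg => (mem_filter.mp hg).2, mul_sum, sum_congr rfl fun F hF => ?_, sum_const,
    smul_eq_mul, mul_comm]
  rw [filter_filter, ← card_cfaces_mul_card_filter_image_eq ρ hface htrans hF₀ (hB hF)]
  congr 2
  exact filter_congr fun g _ => and_iff_right_of_imp fun h => h ▸ hF

theorem card_cfaces_mul_card_filter_image_mem_le (hpure : X.Pure n)
    (hface : ∀ g : G, ∀ σ ∈ X.faces, σ.image (ρ g) ∈ X.faces)
    (htrans : ∀ σ ∈ X.cfaces (n + 1), ∀ τ ∈ X.cfaces (n + 1), ∃ g : G, σ.image (ρ g) = τ)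
    {σ : Finset V} (hσ : σ ∈ X.faces) (S : Finset (Finset V)) :
    (X.cfaces (n + 1)).card * (univ.filter fun g : G => σ.image (ρ g) ∈ S).card ≤
      Fintype.card G * (X.topStar n S).card := by
  obtain ⟨F₀, hF₀, hσF₀⟩ := hpure σ hσ
  rw [← card_cfaces_mul_card_filter_image_mem ρ hface htrans hF₀ (B := X.topStar n S)
    (filter_subset _ _)]
  refine Nat.mul_le_mul_left _ (card_le_card fun g hg => ?_)
  simp only [mem_filter, mem_univ, true_and, topStar] at hg ⊢
  exact ⟨(isAut_of_forall_image_mem ρ hface g).image_mem_cfaces_iff.mpr hF₀, _, hg,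
    image_subset_image hσF₀⟩

end GroupAction

theorem card_cfaces_pos {n : ℕ} (hpure : X.Pure n) : 0 < (X.cfaces (n + 1)).card := by
  obtain ⟨F, hF, -⟩ := hpure ∅ X.empty_mem
  exact card_pos.mpr ⟨F, hF⟩

theorem ConeFun.sum_w_mul_card_filter_conj {n m K : ℕ} {v : V}
    (C : ConeFun X K v) (he : X.IsAut e) (S : Finset (Finset V)) :
    ∑ τ ∈ X.cfaces m,
        X.w n τ * (((X.supp ((C.conj he).toFun (sChain τ))).filter (· ∈ S)).card : ℝ) =
      ∑ τ ∈ X.cfaces m, X.w n τ *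
        (((X.supp (C.toFun (sChain τ))).filter fun σ => σ.image e ∈ S).card : ℝ) := by
  rw [← he.sum_cfaces_image m]
  refine sum_congr rfl fun τ _ => ?_
  rw [he.w_image, C.conj_apply_sChain_image, he.card_filter_supp_pushChain]

theorem card_cfaces_mul_sum_card_filter_image_mem_le {n K : ℕ} {G : Type} [Group G]
    [Fintype G] (ρ : G →* Equiv.Perm V) (hpure : X.Pure n)
    (hface : ∀ g : G, ∀ σ ∈ X.faces, σ.image (ρ g) ∈ X.faces)
    (htrans : ∀ σ ∈ X.cfaces (n + 1), ∀ τ ∈ X.cfaces (n + 1), ∃ g : G, σ.image (ρ g) = τ)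
    {v : V} (C : ConeFun X K v) {τ : Finset V} (hτ : τ ∈ X.cfaces K) (S : Finset (Finset V)) :
    (X.cfaces (n + 1)).card * ∑ σ ∈ X.supp (C.toFun (sChain τ)),
        (univ.filter fun g : G => σ.image (ρ g) ∈ S).card ≤
      C.Vol * (Fintype.card G * (X.topStar n S).card) := by
  rw [mul_sum]
  calc _ ≤ ∑ _σ ∈ X.supp (C.toFun (sChain τ)), Fintype.card G * (X.topStar n S).card :=
        sum_le_sum fun σ hσ =>
          card_cfaces_mul_card_filter_image_mem_le ρ hpure hface htrans (mem_filter.mp hσ).1 S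
    _ ≤ C.Vol * (Fintype.card G * (X.topStar n S).card) := by
        rw [sum_const, smul_eq_mul]
        exact Nat.mul_le_mul_right _
          (le_sup (f := fun τ => X.chainCard (C.toFun (sChain τ))) hτ)

theorem card_mul_sInf_le_sum_w_mul_sum_card {n k : ℕ} {G : Type} [Group G] [Fintype G]
    (ρ : G →* Equiv.Perm V) (hface : ∀ g : G, ∀ σ ∈ X.faces, σ.image (ρ g) ∈ X.faces)
    {v : V} (C : ConeFun X (k + 1) v) {φ : Finset V → ZMod 2} (hφ : X.IsGraded (k + 1) φ) :
    Fintype.card G * sInf {r : ℝ | ∃ ψ, X.IsCoboundary k ψ ∧ r = X.wC n (φ + ψ)} ≤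
      ∑ τ ∈ X.cfaces (k + 1), X.w n τ * ((∑ σ ∈ X.supp (C.toFun (sChain τ)),
        (univ.filter fun g : G => σ.image (ρ g) ∈ X.supp (X.cobdry φ)).card : ℕ) : ℝ) := by
  set S := X.supp (X.cobdry φ)
  rw [← card_univ, ← nsmul_eq_mul, ← sum_const]
  calc _ ≤ ∑ g : G, ∑ τ ∈ X.cfaces (k + 1), X.w n τ *
        (((X.supp (C.toFun (sChain τ))).filter fun σ => σ.image (ρ g) ∈ S).card : ℝ) :=
        sum_le_sum fun g _ =>
          (sInf_le_sum_w_mul_card (C.conj (isAut_of_forall_image_mem ρ hface g)) hφ).trans_eq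
            (C.sum_w_mul_card_filter_conj _ S)
    _ = _ := by
        rw [sum_comm]
        refine sum_congr rfl fun τ _ => ?_
        rw [← mul_sum, ← Nat.cast_sum]
        congr 2
        exact sum_card_bipartiteAbove_eq_sum_card_bipartiteBelow fun (g : G) (σ : Finset V) =>
          σ.image (ρ g) ∈ S

theorem card_cfaces_mul_sInf_le {n : ℕ} {G : Type} [Group G] [Fintype G]
    (ρ : G →* Equiv.Perm V) (hpure : X.Pure n)
    (hface : ∀ g : G, ∀ σ ∈ X.faces, σ.image (ρ g) ∈ X.faces)
    (htrans : ∀ σ ∈ X.cfaces (n + 1), ∀ τ ∈ X.cfaces (n + 1), ∃ g : G, σ.image (ρ g) = τ)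
    {k : ℕ} {v : V} (C : ConeFun X (k + 1) v) {φ : Finset V → ZMod 2}
    (hφ : X.IsGraded (k + 1) φ) :
    ((X.cfaces (n + 1)).card : ℝ) *
        sInf {r : ℝ | ∃ ψ, X.IsCoboundary k ψ ∧ r = X.wC n (φ + ψ)} ≤
      C.Vol * (X.topStar n (X.supp (X.cobdry φ))).card := by
  set I := sInf {r : ℝ | ∃ ψ, X.IsCoboundary k ψ ∧ r = X.wC n (φ + ψ)}
  set N := (X.cfaces (n + 1)).card
  set M := C.Vol * (Fintype.card G * (X.topStar n (X.supp (X.cobdry φ))).card)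
  have hcount := fun τ (hτ : τ ∈ X.cfaces (k + 1)) =>
    card_cfaces_mul_sum_card_filter_image_mem_le ρ hpure hface htrans C hτ (X.supp (X.cobdry φ))
  refine le_of_mul_le_mul_left ?_ (Nat.cast_pos.mpr (Fintype.card_pos (α := G)))
  calc (Fintype.card G : ℝ) * (N * I) = N * (Fintype.card G * I) := by ring
    _ ≤ N * ∑ τ ∈ X.cfaces (k + 1), X.w n τ * ((∑ σ ∈ X.supp (C.toFun (sChain τ)),
          (univ.filter fun g : G => σ.image (ρ g) ∈ X.supp (X.cobdry φ)).card : ℕ) : ℝ) := by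
        gcongr
        exact card_mul_sInf_le_sum_w_mul_sum_card ρ hface C hφ
    _ ≤ ∑ τ ∈ X.cfaces (k + 1), X.w n τ * M := by
        rw [mul_sum]
        refine sum_le_sum fun τ hτ => ?_
        rw [mul_left_comm]
        exact mul_le_mul_of_nonneg_left (by exact_mod_cast hcount τ hτ) (w_nonneg n τ)
    _ ≤ M := by
        rw [← sum_mul]
        exact mul_le_of_le_one_left (Nat.cast_nonneg _) (sum_w_cfaces_le_one n (k + 1))
    _ = Fintype.card G * (C.Vol * (X.topStar n (X.supp (X.cobdry φ))).card) := by
        simp only [M]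
        push_cast
        ring

theorem exists_coneFun_vol_le_of_crad_eq {K D : ℕ} (hD : X.Crad K = D) :
    ∃ v, ∃ C : ConeFun X K v, C.Vol ≤ D := by
  have h : X.Crad K < (D + 1 : ℕ) := by
    rw [hD]
    exact_mod_cast D.lt_succ_self
  simpa only [Crad, iInf_lt_iff, Nat.cast_lt, Nat.lt_succ_iff] using h

end SCplx

open SCplx in
/-- For a pure finite `n`-dimensional strongly symmetric simplicial complex,
if the `k`-th cone radius is finite and equal to `D`, then
`Exp^k_b(X) ≥ 1/(C(n+1,k+1)·Crad_k(X))`, stated pointwise: for every `k`-cochain `φ ∉ B^k(X)`,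
`(1/(C(n+1,k+1)·D)) · dist(φ, B^k(X)) ≤ w(d_k φ)`. -/
theorem stmt0 {V : Type} [DecidableEq V] (n : ℕ) (X : SCplx V) (hpure : X.Pure n)
    {G : Type} [Group G] [Fintype G] (ρ : G →* Equiv.Perm V)
    (hface : ∀ (g : G), ∀ σ ∈ X.faces, σ.image (ρ g) ∈ X.faces)
    (htrans : ∀ σ ∈ X.cfaces (n + 1), ∀ τ ∈ X.cfaces (n + 1), ∃ g : G, σ.image (ρ g) = τ)
    (k : ℕ) (hk : k < n) (D : ℕ) (hD : X.Crad (k + 1) = (D : ℕ∞)) :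
    ∀ φ : Finset V → ZMod 2, X.IsGraded (k + 1) φ → ¬X.IsCoboundary k φ →
      (1 / (((n + 1).choose (k + 1) : ℝ) * (D : ℝ))) *
          sInf {r : ℝ | ∃ ψ, X.IsCoboundary k ψ ∧ r = X.wC n (φ + ψ)} ≤
        X.wC n (X.cobdry φ) := by
  intro φ hφ _
  obtain ⟨v, C, hCD⟩ := exists_coneFun_vol_le_of_crad_eq hD
  set N : ℝ := ((X.cfaces (n + 1)).card : ℝ)
  set B : ℝ := ((X.topStar n (X.supp (X.cobdry φ))).card : ℝ)
  have hN : 0 < N := Nat.cast_pos.mpr (card_cfaces_pos hpure)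
  have hI := card_cfaces_mul_sInf_le ρ hpure hface htrans C hφ
  have hB := mul_card_topStar_supp_cobdry_le hk hφ
  have hCD' : (C.Vol : ℝ) ≤ D := Nat.cast_le.mpr hCD
  rw [one_div_mul_eq_div]
  refine div_le_of_le_mul₀ (by positivity) (wC_nonneg n _) (le_of_mul_le_mul_left ?_ hN)
  calc N * sInf _ ≤ C.Vol * B := hI
    _ ≤ D * ((k + 2) * B) := by
        gcongr
        exact le_mul_of_one_le_left (Nat.cast_nonneg _) (by linarith)
    _ ≤ D * ((n + 1).choose (k + 1) * N * X.wC n (X.cobdry φ)) := by gcongr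
    _ = N * (X.wC n (X.cobdry φ) * ((n + 1).choose (k + 1) * D)) := by ring
end

section
/- Let X be a finite n-dimensional simplicial complex and 0 ≤ k ≤ n−1. There exists a k-cone function (with some apex) if and only if for every 0 ≤ j ≤ k the j-th reduced homology of X with F_2 coefficients vanishes, i.e., Z_j(X) = B_j(X). -/
open Finset

namespace SCplx

variable {V : Type} [DecidableEq V] (X : SCplx V)

lemma bdry_add (c₁ c₂ : Finset V → ZMod 2) :
    X.bdry (c₁ + c₂) = X.bdry c₁ + X.bdry c₂ := by
  funext ρ
  simp [bdry, Finset.sum_add_distrib]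

lemma bdry_zero : X.bdry 0 = 0 := by funext ρ; simp [bdry]

lemma bdry_sChain_s7 (τ ρ : Finset V) :
    X.bdry (sChain τ) ρ =
      if τ ∈ X.faces ∧ ρ ⊆ τ ∧ τ.card = ρ.card + 1 then 1 else 0 := by
  unfold bdry sChain
  rw [Finset.sum_ite_eq' (X.faces.filter fun σ => ρ ⊆ σ ∧ σ.card = ρ.card + 1) τ
    (fun _ => (1 : ZMod 2))]
  simp [Finset.mem_filter, and_assoc]

lemma bdry_sChain_empty : X.bdry (sChain (∅ : Finset V)) = 0 := by
  funext ρ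
  rw [bdry_sChain_s7]
  simp

lemma bdry_sChain_singleton (v : V) (hv : ({v} : Finset V) ∈ X.faces) :
    X.bdry (sChain {v}) = sChain ∅ := by
  funext ρ
  rw [bdry_sChain_s7, sChain]
  by_cases h : ρ = ∅
  · subst h; simp [hv]
  · have : ρ.card ≠ 0 := fun hc => h (Finset.card_eq_zero.mp hc)
    simp only [h, if_false]
    rw [if_neg]
    rintro ⟨-, -, hc⟩
    rw [Finset.card_singleton] at hc
    omega

lemma bdry_graded (m : ℕ) (c : Finset V → ZMod 2) (hc : X.IsGraded (m + 1) c) :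
    X.IsGraded m (X.bdry c) := by
  intro ρ hρ
  obtain ⟨σ, hσ, hne⟩ := Finset.exists_ne_zero_of_sum_ne_zero hρ
  rw [Finset.mem_filter] at hσ
  have hσc := hc σ hne
  rw [cfaces, Finset.mem_filter] at hσc ⊢
  exact ⟨X.down_closed σ hσ.1 ρ hσ.2.1, by omega⟩

lemma graded_add (m : ℕ) (c₁ c₂ : Finset V → ZMod 2) (h₁ : X.IsGraded m c₁)
    (h₂ : X.IsGraded m c₂) : X.IsGraded m (c₁ + c₂) := by
  intro σ hσ
  by_cases h : c₁ σ = 0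
  · exact h₂ σ (by simpa [Pi.add_apply, h] using hσ)
  · exact h₁ σ h

lemma sChain_graded (m : ℕ) (τ : Finset V) (hτ : τ ∈ X.cfaces m) :
    X.IsGraded m (sChain τ) := by
  intro σ hσ
  have : σ = τ := by by_contra h; exact hσ (by simp [sChain, h])
  rwa [this]

lemma bdry_bdry (c : Finset V → ZMod 2) : X.bdry (X.bdry c) = 0 := by
  funext ρ
  have h : X.bdry (X.bdry c) ρ =
      ∑ p ∈ (X.faces.filter (fun σ => ρ ⊆ σ ∧ σ.card = ρ.card + 1)).sigma
        (fun σ => X.faces.filter (fun π => σ ⊆ π ∧ π.card = σ.card + 1)), c p.2 := by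
    rw [Finset.sum_sigma]
    rfl
  rw [h, Pi.zero_apply]
  refine Finset.sum_involution (fun p _ => ⟨ρ ∪ (p.2 \ p.1), p.2⟩) ?_ ?_ ?_ ?_
  · intro p hp
    exact CharTwo.add_self_eq_zero _
  · intro p hp _
    simp only [Finset.mem_sigma, Finset.mem_filter] at hp
    obtain ⟨⟨hσF, hρσ, hcσ⟩, hπF, hσπ, hcπ⟩ := hp
    intro heq
    have h1 : (p.2 \ p.1).card = 1 := by
      rw [Finset.card_sdiff_of_subset hσπ]; omega
    obtain ⟨x, hx⟩ := Finset.card_eq_one.mp h1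
    have hxp : x ∈ p.2 \ p.1 := by rw [hx]; exact Finset.mem_singleton_self x
    have hxσ' : x ∈ ρ ∪ (p.2 \ p.1) := Finset.mem_union_right _ hxp
    have : x ∈ p.1 := by
      have := congrArg (x ∈ ·) (congrArg Sigma.fst heq)
      simp only [eq_iff_iff] at this
      exact this.mp hxσ'
    exact (Finset.mem_sdiff.mp hxp).2 this
  · intro p hp
    simp only [Finset.mem_sigma, Finset.mem_filter] at hp ⊢
    obtain ⟨⟨hσF, hρσ, hcσ⟩, hπF, hσπ, hcπ⟩ := hp
    have hdisj : Disjoint ρ (p.2 \ p.1) := by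
      rw [Finset.disjoint_right]
      intro x hx hxρ
      exact (Finset.mem_sdiff.mp hx).2 (hρσ hxρ)
    have hcard : (ρ ∪ (p.2 \ p.1)).card = ρ.card + 1 := by
      rw [Finset.card_union_of_disjoint hdisj, Finset.card_sdiff_of_subset hσπ]
      omega
    have hsub : ρ ∪ (p.2 \ p.1) ⊆ p.2 :=
      Finset.union_subset (hρσ.trans hσπ) (Finset.sdiff_subset)
    exact ⟨⟨X.down_closed p.2 hπF _ hsub, Finset.subset_union_left, hcard⟩,
      hπF, hsub, by omega⟩
  · intro p hp
    simp only [Finset.mem_sigma, Finset.mem_filter] at hp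
    obtain ⟨⟨hσF, hρσ, hcσ⟩, hπF, hσπ, hcπ⟩ := hp
    have key : ρ ∪ (p.2 \ (ρ ∪ (p.2 \ p.1))) = p.1 := by
      ext x
      simp only [Finset.mem_union, Finset.mem_sdiff, not_or, not_and, not_not]
      constructor
      · rintro (hx | ⟨hxπ, hxρ, hxd⟩)
        · exact hρσ hx
        · exact hxd hxπ
      · intro hx
        by_cases hxρ : x ∈ ρ
        · exact Or.inl hxρ
        · exact Or.inr ⟨hσπ hx, hxρ, fun _ => hx⟩
    exact Sigma.ext key (by simp)


noncomputable def lift (X : SCplx V) (f : Finset V → Finset V → ZMod 2)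
    (c : Finset V → ZMod 2) : Finset V → ZMod 2 :=
  fun σ => ∑ τ ∈ X.faces, c τ * f τ σ

lemma lift_zero (f : Finset V → Finset V → ZMod 2) : X.lift f 0 = 0 := by
  funext σ; simp [lift]

lemma lift_add (f : Finset V → Finset V → ZMod 2) (c₁ c₂ : Finset V → ZMod 2) :
    X.lift f (c₁ + c₂) = X.lift f c₁ + X.lift f c₂ := by
  funext σ
  simp [lift, add_mul, Finset.sum_add_distrib]

lemma lift_sChain (f : Finset V → Finset V → ZMod 2) (τ : Finset V) (hτ : τ ∈ X.faces) :
    X.lift f (sChain τ) = f τ := by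
  funext σ
  unfold lift sChain
  simp only [ite_mul, one_mul, zero_mul]
  rw [Finset.sum_ite_eq' X.faces τ (fun τ' => f τ' σ), if_pos hτ]

lemma lift_congr (f f' : Finset V → Finset V → ZMod 2) (c : Finset V → ZMod 2)
    (h : ∀ τ ∈ X.faces, c τ ≠ 0 → f τ = f' τ) : X.lift f c = X.lift f' c := by
  funext σ
  refine Finset.sum_congr rfl fun τ hτ => ?_
  by_cases hc : c τ = 0
  · simp [hc]
  · rw [h τ hτ hc]

lemma lift_graded (f : Finset V → Finset V → ZMod 2) (m : ℕ)
    (hf : ∀ τ ∈ X.cfaces m, X.IsGraded (m + 1) (f τ)) (c : Finset V → ZMod 2)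
    (hc : X.IsGraded m c) : X.IsGraded (m + 1) (X.lift f c) := by
  intro σ hσ
  obtain ⟨τ, hτF, hne⟩ := Finset.exists_ne_zero_of_sum_ne_zero hσ
  have hcτ : c τ ≠ 0 := fun h => hne (by simp [h])
  exact hf τ (hc τ hcτ) σ (fun h => hne (by simp [h]))

lemma bdry_lift (f : Finset V → Finset V → ZMod 2) (c : Finset V → ZMod 2) :
    X.bdry (X.lift f c) = X.lift (fun τ => X.bdry (f τ)) c := by
  funext ρ
  unfold bdry lift
  rw [Finset.sum_comm]
  exact Finset.sum_congr rfl fun τ _ => (Finset.mul_sum _ _ _).symm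

lemma sum_sChain (m : ℕ) (c : Finset V → ZMod 2) (hc : X.IsGraded m c) (ρ : Finset V) :
    ∑ τ ∈ X.cfaces m, c τ * sChain τ ρ = c ρ := by
  unfold sChain
  simp only [mul_ite, mul_one, mul_zero]
  rw [Finset.sum_ite_eq (X.cfaces m) ρ c]
  by_cases h : ρ ∈ X.cfaces m
  · rw [if_pos h]
  · rw [if_neg h]
    by_contra hne
    exact h (hc ρ (fun h0 => hne h0.symm))

lemma sum_bdry_sChain (m : ℕ) (c : Finset V → ZMod 2) (hc : X.IsGraded m c) (ρ : Finset V) :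
    ∑ τ ∈ X.cfaces m, c τ * X.bdry (sChain τ) ρ = X.bdry c ρ := by
  have h1 : ∀ τ ∈ X.cfaces m, c τ * X.bdry (sChain τ) ρ =
      if ρ ⊆ τ ∧ τ.card = ρ.card + 1 then c τ else 0 := by
    intro τ hτ
    rw [bdry_sChain_s7]
    have hF : τ ∈ X.faces := (Finset.mem_filter.mp hτ).1
    by_cases h : ρ ⊆ τ ∧ τ.card = ρ.card + 1
    · simp [h, hF]
    · rw [if_neg h, if_neg (fun hh => h ⟨hh.2.1, hh.2.2⟩), mul_zero]
  rw [Finset.sum_congr rfl h1, ← Finset.sum_filter]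
  unfold bdry
  apply Finset.sum_subset
  · intro τ hτ
    simp only [cfaces, Finset.mem_filter] at hτ ⊢
    tauto
  · intro τ hτ hnot
    by_contra hne
    have hg := hc τ hne
    simp only [cfaces, Finset.mem_filter] at hτ hnot hg
    tauto

noncomputable def coneAux (X : SCplx V) (v : V) : ℕ → Finset V → (Finset V → ZMod 2)
  | 0 => fun τ => if τ = (∅ : Finset V) then sChain {v} else 0
  | (m + 1) => fun τ =>
      if τ.card = m + 1 then
        letI := Classical.dec (X.IsBdryChain m
          (sChain τ + X.lift (coneAux X v m) (X.bdry (sChain τ))))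
        if h : X.IsBdryChain m (sChain τ + X.lift (coneAux X v m) (X.bdry (sChain τ)))
          then Classical.choose h else 0
      else coneAux X v m τ

lemma coneAux_delegate (v : V) (m m' : ℕ) (h : m ≤ m') (τ : Finset V) (hτ : τ.card ≤ m) :
    coneAux X v m' τ = coneAux X v m τ := by
  induction m' with
  | zero =>
    have : m = 0 := by omega
    subst this; rfl
  | succ m' ih =>
    rcases Nat.eq_or_lt_of_le h with he | hlt
    · subst he; rfl
    · have hm : m ≤ m' := by omega
      have hne : τ.card ≠ m' + 1 := by omega
      rw [coneAux]
      beta_reduce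
      rw [if_neg hne]
      exact ih hm

end SCplx

open SCplx in
/-- For a finite `n`-dimensional complex `X` and `0 ≤ k ≤ n-1`,
a `k`-cone function (with some apex) exists iff the reduced homology with `𝔽₂`
coefficients vanishes in all degrees `0 ≤ j ≤ k`, i.e. `Z_j(X) = B_j(X)`. -/
theorem stmt7 {V : Type} [DecidableEq V] (n : ℕ) (X : SCplx V)
    (hdim : ∀ σ ∈ X.faces, σ.card ≤ n + 1) (htop : (X.cfaces (n + 1)).Nonempty)
    (k : ℕ) (hk : k < n) :
    (∃ v : V, Nonempty (ConeFun X (k + 1) v)) ↔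
      ∀ j ≤ k, ∀ c, X.IsCycle j c → X.IsBdryChain j c := by
  constructor
  · rintro ⟨v, ⟨C⟩⟩ j hj c hc
    have h0 : C.toFun 0 = 0 := by
      have h := C.map_add 0 0
      rw [add_zero] at h
      exact (left_eq_add.mp h)
    refine ⟨C.toFun c, C.graded (j + 1) (by omega) c hc.1, ?_⟩
    rw [C.cone_eq (j + 1) (by omega) (by omega) c hc.1, hc.2, h0, add_zero]
  · intro H
    obtain ⟨σ₀, hσ₀⟩ := htop
    rw [cfaces, Finset.mem_filter] at hσ₀
    have hσ₀ne : σ₀.Nonempty := Finset.card_pos.mp (by omega)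
    obtain ⟨v, hv⟩ := hσ₀ne
    have hvF : ({v} : Finset V) ∈ X.faces :=
      X.down_closed σ₀ hσ₀.1 {v} (Finset.singleton_subset_iff.mpr hv)
    have hfempty : X.coneAux v (k + 1) ∅ = sChain {v} := by
      rw [X.coneAux_delegate v 0 (k + 1) (by omega) ∅ (by simp)]
      simp [coneAux]
    set f := X.coneAux v (k + 1) with hfdef
    have Pstep : ∀ m, (∀ τ ∈ X.cfaces m, X.IsGraded (m + 1) (f τ) ∧
          X.bdry (f τ) = sChain τ + X.lift f (X.bdry (sChain τ))) →
        ∀ c, X.IsGraded m c → X.IsGraded (m + 1) (X.lift f c) ∧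
          X.bdry (X.lift f c) = c + X.lift f (X.bdry c) := by
      intro m hQE c hc
      refine ⟨X.lift_graded f m (fun τ hτ => (hQE τ hτ).1) c hc, ?_⟩
      funext ρ
      rw [X.bdry_lift]
      show ∑ τ ∈ X.faces, c τ * X.bdry (f τ) ρ = (c + X.lift f (X.bdry c)) ρ
      have hsub : ∑ τ ∈ X.cfaces m, c τ * X.bdry (f τ) ρ
          = ∑ τ ∈ X.faces, c τ * X.bdry (f τ) ρ := by
        apply Finset.sum_subset (Finset.filter_subset _ _)
        intro τ hτ hτn
        have hc0 : c τ = 0 := by by_contra h; exact hτn (hc τ h)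
        simp [hc0]
      rw [← hsub]
      have hterm : ∀ τ ∈ X.cfaces m, c τ * X.bdry (f τ) ρ =
          c τ * sChain τ ρ + c τ * X.lift f (X.bdry (sChain τ)) ρ := by
        intro τ hτ
        rw [(hQE τ hτ).2, Pi.add_apply, mul_add]
      rw [Finset.sum_congr rfl hterm, Finset.sum_add_distrib, X.sum_sChain m c hc ρ,
        Pi.add_apply]
      congr 1
      calc ∑ τ ∈ X.cfaces m, c τ * X.lift f (X.bdry (sChain τ)) ρ
          = ∑ τ ∈ X.cfaces m, ∑ τ' ∈ X.faces, (c τ * X.bdry (sChain τ) τ') * f τ' ρ := by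
            refine Finset.sum_congr rfl fun τ _ => ?_
            rw [lift, Finset.mul_sum]
            exact Finset.sum_congr rfl fun τ' _ => (mul_assoc _ _ _).symm
        _ = ∑ τ' ∈ X.faces, (∑ τ ∈ X.cfaces m, c τ * X.bdry (sChain τ) τ') * f τ' ρ := by
            rw [Finset.sum_comm]
            exact Finset.sum_congr rfl fun τ' _ => (Finset.sum_mul _ _ _).symm
        _ = ∑ τ' ∈ X.faces, X.bdry c τ' * f τ' ρ :=
            Finset.sum_congr rfl fun τ' _ => by rw [X.sum_bdry_sChain m c hc τ']
        _ = X.lift f (X.bdry c) ρ := rfl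
    have main : ∀ m, m ≤ k + 1 → ∀ τ ∈ X.cfaces m, X.IsGraded (m + 1) (f τ) ∧
        X.bdry (f τ) = sChain τ + X.lift f (X.bdry (sChain τ)) := by
      intro m
      induction m with
      | zero =>
        intro _ τ hτ
        have hτe : τ = ∅ := Finset.card_eq_zero.mp (Finset.mem_filter.mp hτ).2
        subst hτe
        rw [hfempty]
        constructor
        · intro σ hσ
          have hσv : σ = {v} := by by_contra h; exact hσ (by simp [sChain, h])
          subst hσv
          simp [cfaces, Finset.mem_filter, hvF]
        · rw [X.bdry_sChain_singleton v hvF, X.bdry_sChain_empty, X.lift_zero, add_zero]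
      | succ m ih =>
        intro hm τ hτ
        obtain ⟨hτF, hτc⟩ := Finset.mem_filter.mp hτ
        have hPm := Pstep m (ih (by omega))
        have hdg : X.IsGraded m (X.bdry (sChain τ)) :=
          X.bdry_graded m _ (X.sChain_graded (m + 1) τ hτ)
        have hb_graded : X.IsGraded (m + 1) (sChain τ + X.lift f (X.bdry (sChain τ))) :=
          X.graded_add (m + 1) _ _ (X.sChain_graded (m + 1) τ hτ) (hPm _ hdg).1
        have hb_bdry : X.bdry (sChain τ + X.lift f (X.bdry (sChain τ))) = 0 := by
          rw [X.bdry_add, (hPm _ hdg).2, X.bdry_bdry, X.lift_zero, add_zero]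
          funext σ
          exact CharTwo.add_self_eq_zero _
        have hBd : X.IsBdryChain m (sChain τ + X.lift f (X.bdry (sChain τ))) :=
          H m (by omega) _ ⟨hb_graded, hb_bdry⟩
        have hlifteq : X.lift (X.coneAux v m) (X.bdry (sChain τ)) =
            X.lift f (X.bdry (sChain τ)) := by
          apply X.lift_congr
          intro τ' hτ' hne
          have hτ'c : τ'.card = m := (Finset.mem_filter.mp (hdg τ' hne)).2
          rw [hfdef]
          exact (X.coneAux_delegate v m (k + 1) (by omega) τ' (by omega)).symm
        have hfτ : f τ = X.coneAux v (m + 1) τ := by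
          rw [hfdef]
          exact X.coneAux_delegate v (m + 1) (k + 1) hm τ (by omega)
        rw [hfτ, coneAux]
        beta_reduce
        rw [if_pos hτc, hlifteq, dif_pos hBd]
        exact ⟨(Classical.choose_spec hBd).1, (Classical.choose_spec hBd).2⟩
    exact ⟨v, ⟨{
      toFun := X.lift f
      map_add := X.lift_add f
      graded := fun m hm c hc => (Pstep m (main m hm) c hc).1
      apex := by rw [X.lift_sChain f ∅ X.empty_mem, hfempty]
      cone_eq := fun m _ hm c hc => (Pstep m (main m hm) c hc).2 }⟩⟩
end

section
/- Let n ≥ 2 and let q be a prime power. Let Unip_{n+1}(F_q) be the group of (n+1)×(n+1) upper unitriangular matrices over F_q (equivalently, the group generated by the elementary matrices e_{i,j}(a) for 1 ≤ i < j ≤ n+1, a ∈ F_q). For 0 ≤ i ≤ n−1 let K_i be the subgroup generated by { e_{j,j+1}(a) : j ∈ {1,...,n}∖{i+1}, a ∈ F_q }. Then every g ∈ Unip_{n+1}(F_q) can be written as a product of at most 6 elements of K_0 ∪ K_{n-1}. -/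
/-!
A unitriangular matrix lies in `K_i` as soon as its upper-right block (rows `≤ i+1`, columns
`≥ i+2`) vanishes: clearing its entries column by column writes it as a product of the
transvections `e_{r,s}(a)` at its nonzero entries, and each of these is an iterated commutator of
generators `e_{j,j+1}` with `r ≤ j < s`, hence `j ≠ i+1`.
Given `g`, replacing its last column by the last basis vector gives `k ∈ K_{n-1}` with `k⁻¹ g`
equal to `1` off the last column; clearing its `(1, n+1)` entry `c` then gives
`x = e_{1,n+1}(-c) k⁻¹ g ∈ K_0`. Since `e_{1,n+1}(c) = [e_{1,2}(c), e_{2,n+1}(1)]` with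
`e_{1,2} ∈ K_{n-1}` and `e_{2,n+1} ∈ K_0`,
`g = k · e_{1,2}(c) · e_{2,n+1}(1) · e_{1,2}(-c) · e_{2,n+1}(-1) · x`.
-/

/-- The unipotent group `Unip_{n+1}(F)`: the subgroup of invertible `(n+1)×(n+1)` matrices
over `F` generated by the elementary matrices `e_{i,j}(a) = 1 + a·E_{i,j}`, `i < j`
(equivalently, the group of upper unitriangular matrices). -/
def unipGroup (n : ℕ) (F : Type) [Field F] :
    Subgroup (Matrix (Fin (n + 1)) (Fin (n + 1)) F)ˣ :=
  Subgroup.closure {M | ∃ (i j : Fin (n + 1)) (a : F), i < j ∧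
    (M : Matrix (Fin (n + 1)) (Fin (n + 1)) F) = 1 + Matrix.single i j a}

/-- For `0 ≤ i ≤ n-1`, the subgroup `K_i` of `Unip_{n+1}(F)` generated by the superdiagonal
elementary matrices `e_{j,j+1}(a)` with `j ∈ {1,…,n} \ {i+1}` (`1`-based indexing; here
`j : Fin n` is `0`-based, so the excluded index is `j = i`). -/
def unipK (n : ℕ) (F : Type) [Field F] (i : Fin n) :
    Subgroup (Matrix (Fin (n + 1)) (Fin (n + 1)) F)ˣ :=
  Subgroup.closure {M | ∃ (j : Fin n) (a : F), j ≠ i ∧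
    (M : Matrix (Fin (n + 1)) (Fin (n + 1)) F) =
      1 + Matrix.single j.castSucc j.succ a}

open Matrix
open scoped commutatorElement

namespace Matrix

section Transvection

variable {ι R : Type*} [Fintype ι] [DecidableEq ι] [CommRing R]

theorem transvection_commutator {i k j : ι} (hik : i ≠ k) (hkj : k ≠ j) (hij : i ≠ j)
    (a b : R) :
    transvection i k a * transvection k j b * transvection i k (-a) * transvection k j (-b) =
      transvection i j (a * b) := by
  simp only [transvection, Matrix.mul_add, Matrix.add_mul, mul_one, one_mul, single_mul_single_same,
    ne_eq, hik.symm, hkj.symm, hij.symm, not_false_eq_true, single_mul_single_of_ne, add_zero,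
    mul_neg, neg_mul, neg_neg]
  simp only [← single_neg]
  abel

def transvectionUnit {i j : ι} (hij : i ≠ j) (c : R) : (Matrix ι ι R)ˣ where
  val := transvection i j c
  inv := transvection i j (-c)
  val_inv := by rw [transvection_mul_transvection_same i j hij, add_neg_cancel, transvection_zero]
  inv_val := by rw [transvection_mul_transvection_same i j hij, neg_add_cancel, transvection_zero]

@[simp]
theorem coe_transvectionUnit {i j : ι} (hij : i ≠ j) (c : R) :
    (transvectionUnit hij c : Matrix ι ι R) = transvection i j c :=
  rfl

theorem inv_transvectionUnit {i j : ι} (hij : i ≠ j) (c : R) :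
    (transvectionUnit hij c)⁻¹ = transvectionUnit hij (-c) :=
  Units.ext rfl

theorem commutatorElement_transvectionUnit {i k j : ι} (hik : i ≠ k) (hkj : k ≠ j)
    (hij : i ≠ j) (a b : R) :
    ⁅transvectionUnit hik a, transvectionUnit hkj b⁆ = transvectionUnit hij (a * b) := by
  ext1
  simp only [commutatorElement_def, inv_transvectionUnit, Units.val_mul, coe_transvectionUnit,
    transvection_commutator hik hkj hij]

theorem coe_inv_mul_apply_of_forall_apply_eq {u v : (Matrix ι ι R)ˣ} {c : ι}
    (h : ∀ r, (u : Matrix ι ι R) r c = (v : Matrix ι ι R) r c) (r : ι) :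
    ((u⁻¹ * v : (Matrix ι ι R)ˣ) : Matrix ι ι R) r c = (1 : Matrix ι ι R) r c := by
  simp only [Units.val_mul, mul_apply, ← h, ← Units.inv_mul u]

theorem sub_single_mul_transvection {M : Matrix ι ι R} {i j : ι} (hij : i ≠ j)
    (hcol : ∀ r, M r i = (1 : Matrix ι ι R) r i) :
    (M - single i j (M i j)) * transvection i j (M i j) = M := by
  ext r s
  by_cases hs : s = j
  · subst hs
    rw [mul_transvection_apply_same, Matrix.sub_apply, Matrix.sub_apply, hcol]
    by_cases hr : r = i
    · subst hr; simp [hij.symm]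
    · simp [hr, Ne.symm hr]
  · rw [mul_transvection_apply_of_ne _ _ _ _ hs, Matrix.sub_apply, single_apply, if_neg (by tauto),
      sub_zero]

end Transvection

def IsUnitriangular {ι R : Type*} [LT ι] [Zero R] [One R] (M : Matrix ι ι R) : Prop :=
  M.IsUpperTriangular ∧ ∀ i, M i i = 1

theorem IsUpperTriangular.mul_apply_self {ι R : Type*} [Fintype ι] [LinearOrder ι] [CommRing R]
    {A B : Matrix ι ι R} (hA : A.IsUpperTriangular) (hB : B.IsUpperTriangular) (i : ι) :
    (A * B) i i = A i i * B i i := by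
  rw [mul_apply, Finset.sum_eq_single i _ (by simp)]
  intro k _ hki
  rcases lt_or_gt_of_ne hki with h | h
  · rw [hA h, zero_mul]
  · rw [hB h, mul_zero]

theorem IsUnitriangular.mul {ι R : Type*} [Fintype ι] [LinearOrder ι] [CommRing R]
    {A B : Matrix ι ι R} (hA : IsUnitriangular A) (hB : IsUnitriangular B) :
    IsUnitriangular (A * B) :=
  ⟨hA.1.mul hB.1, fun i => by rw [hA.1.mul_apply_self hB.1, hA.2, hB.2, one_mul]⟩

section Unitriangular

variable {ι R : Type*} [LinearOrder ι] [DecidableEq ι] [CommRing R]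

theorem isUnitriangular_one : IsUnitriangular (1 : Matrix ι ι R) :=
  ⟨blockTriangular_one, fun i => one_apply_eq i⟩

theorem isUnitriangular_transvection {i j : ι} (hij : i < j) (c : R) :
    IsUnitriangular (transvection i j c) :=
  ⟨blockTriangular_transvection hij.le c, fun k => by
    simp [transvection,
      single_apply_of_ne (h := fun h : i = k ∧ j = k => hij.ne (h.1.trans h.2.symm))]⟩

theorem IsUnitriangular.updateCol_single {M : Matrix ι ι R} (hM : IsUnitriangular M) (j : ι) :
    IsUnitriangular (M.updateCol j (Pi.single j 1)) := by
  refine ⟨fun r c (hcr : c < r) => ?_, fun i => ?_⟩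
  · by_cases hc : c = j
    · subst hc
      simp [hcr.ne']
    · rw [updateCol_ne hc, hM.1 hcr]
  · by_cases hi : i = j
    · subst hi; simp
    · rw [updateCol_ne hi, hM.2]

theorem IsUnitriangular.sub_single {M : Matrix ι ι R} (hM : IsUnitriangular M) {i j : ι}
    (hij : i < j) (c : R) : IsUnitriangular (M - single i j c) :=
  ⟨hM.1.sub (blockTriangular_single hij.le c), fun k => by
    simp [hM.2, single_apply_of_ne (h := fun h : i = k ∧ j = k => hij.ne (h.1.trans h.2.symm))]⟩

theorem IsUnitriangular.eq_one {M : Matrix ι ι R} (hM : IsUnitriangular M)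
    (h : ∀ i j, i < j → M i j = 0) : M = 1 := by
  ext i j
  rcases lt_trichotomy i j with hij | rfl | hij
  · rw [h i j hij, one_apply_ne hij.ne]
  · rw [hM.2, one_apply_eq]
  · rw [hM.1 hij, one_apply_ne hij.ne']

variable [Fintype ι]

theorem IsUnitriangular.units_inv {u : (Matrix ι ι R)ˣ}
    (hu : IsUnitriangular (u : Matrix ι ι R)) :
    IsUnitriangular (↑u⁻¹ : Matrix ι ι R) := by
  let := u.invertible
  have htri : (↑u⁻¹ : Matrix ι ι R).IsUpperTriangular := by
    rw [coe_units_inv]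
    exact blockTriangular_inv_of_blockTriangular hu.1
  refine ⟨htri, fun i => ?_⟩
  have h := congr_fun (congr_fun u.inv_mul i) i
  rwa [htri.mul_apply_self hu.1, hu.2, mul_one, one_apply_eq] at h

variable (ι R) in
def unitriangularGroup : Subgroup (Matrix ι ι R)ˣ where
  carrier := {u | IsUnitriangular (u : Matrix ι ι R)}
  mul_mem' ha hb := IsUnitriangular.mul ha hb
  one_mem' := isUnitriangular_one
  inv_mem' hu := IsUnitriangular.units_inv hu

theorem IsUnitriangular.exists_unit_mem {H : Subgroup (Matrix ι ι R)ˣ} {M : Matrix ι ι R}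
    (hM : IsUnitriangular M)
    (hH : ∀ i j (hij : i < j), M i j ≠ 0 → transvectionUnit hij.ne (M i j) ∈ H) :
    ∃ u ∈ H, (u : Matrix ι ι R) = M := by
  obtain ⟨N, hN⟩ : ∃ N, {p : ι × ι | p.1 < p.2 ∧ M p.1 p.2 ≠ 0}.ncard = N :=
    ⟨_, rfl⟩
  induction N generalizing M with
  | zero =>
    have hS := (Set.ncard_eq_zero (Set.toFinite _)).1 hN
    refine ⟨1, one_mem H, (hM.eq_one fun i j hij => ?_).symm⟩
    by_contra hne
    exact Set.eq_empty_iff_forall_notMem.1 hS (i, j) ⟨hij, hne⟩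
  | succ N ih =>
    set S := {p : ι × ι | p.1 < p.2 ∧ M p.1 p.2 ≠ 0}
    obtain ⟨⟨i, j⟩, hmem, hmin⟩ :=
      S.exists_min_image Prod.snd S.toFinite (Set.nonempty_of_ncard_ne_zero (by omega))
    obtain ⟨hij, hMij⟩ : i < j ∧ M i j ≠ 0 := hmem
    -- `j` is the first column with an off-diagonal entry, so column `i < j` is a basis vector
    have hcol : ∀ r, M r i = (1 : Matrix ι ι R) r i := by
      intro r
      rcases lt_trichotomy r i with hri | rfl | hri
      · by_contra hne
        rw [one_apply_ne hri.ne] at hne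
        exact absurd (hmin (r, i) ⟨hri, hne⟩) (not_le.2 hij)
      · rw [hM.2, one_apply_eq]
      · rw [hM.1 hri, one_apply_ne hri.ne']
    set M' := M - single i j (M i j)
    have hM' : ∀ r s, M' r s = if (r, s) = (i, j) then 0 else M r s := by
      intro r s
      by_cases h : (r, s) = (i, j)
      · obtain ⟨rfl, rfl⟩ := Prod.ext_iff.1 h
        simp [M']
      · simp [M', h, single_apply_of_ne (h := fun h' : i = r ∧ j = s => h (by rw [h'.1, h'.2]))]
    have hS' : {p : ι × ι | p.1 < p.2 ∧ M' p.1 p.2 ≠ 0} = S \ {(i, j)} := by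
      ext p
      by_cases hp : p = (i, j) <;> simp [hM', hp, S]
    obtain ⟨u, huH, hu⟩ := ih (M := M') (hM.sub_single hij (M i j)) (fun r s hrs h => by
        rw [hM'] at h ⊢
        split_ifs at h ⊢ with hp
        · exact absurd rfl h
        · exact hH r s hrs h)
      (by rw [hS', Set.ncard_sdiff_singleton_of_mem (show (i, j) ∈ S from ⟨hij, hMij⟩), hN,
        Nat.add_sub_cancel])
    refine ⟨u * transvectionUnit hij.ne (M i j), mul_mem huH (hH i j hij hMij), ?_⟩
    rw [Units.val_mul, hu, coe_transvectionUnit, sub_single_mul_transvection hij.ne hcol]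

end Unitriangular

end Matrix

section Unipotent

variable {n : ℕ} {F : Type} [Field F]

theorem unipGroup_le_unitriangularGroup : unipGroup n F ≤ unitriangularGroup (Fin (n + 1)) F := by
  rw [unipGroup, Subgroup.closure_le]
  rintro M ⟨i, j, a, hij, hM⟩
  change IsUnitriangular (M : Matrix (Fin (n + 1)) (Fin (n + 1)) F)
  rw [hM]
  exact isUnitriangular_transvection hij a

theorem transvectionUnit_mem_unipK (k : Fin n) {i j : Fin (n + 1)} (hij : i < j)
    (hk : ¬(i ≤ k.castSucc ∧ k.succ ≤ j)) (a : F) :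
    transvectionUnit hij.ne a ∈ unipK n F k := by
  induction j using Fin.induction generalizing i a with
  | zero => exact absurd hij (Fin.not_lt_zero i)
  | succ m ih =>
    have hgen : ∀ b : F, m ≠ k →
        transvectionUnit (Fin.castSucc_lt_succ (i := m)).ne b ∈ unipK n F k :=
      fun b hm => Subgroup.subset_closure ⟨m, b, hm, rfl⟩
    rcases (Fin.le_castSucc_iff.2 hij).eq_or_lt with rfl | him
    · exact hgen a fun hm => hk ⟨hm ▸ le_rfl, hm ▸ le_rfl⟩
    · rw [← mul_one a, ← commutatorElement_transvectionUnit him.ne Fin.castSucc_lt_succ.ne]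
      have h₁ := ih him (fun h => hk ⟨h.1, h.2.trans Fin.castSucc_lt_succ.le⟩) a
      have h₂ := hgen 1 fun hm => hk ⟨hm ▸ him.le, hm ▸ le_rfl⟩
      rw [commutatorElement_def]
      exact mul_mem (mul_mem (mul_mem h₁ h₂) (inv_mem h₁)) (inv_mem h₂)

theorem Matrix.IsUnitriangular.exists_mem_unipK (k : Fin n)
    {M : Matrix (Fin (n + 1)) (Fin (n + 1)) F} (hM : IsUnitriangular M)
    (hblock : ∀ i j, i ≤ k.castSucc → k.succ ≤ j → M i j = 0) :
    ∃ u ∈ unipK n F k, (u : Matrix (Fin (n + 1)) (Fin (n + 1)) F) = M :=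
  hM.exists_unit_mem fun i j hij hMij =>
    transvectionUnit_mem_unipK k hij (fun h => hMij (hblock i j h.1 h.2)) _

theorem exists_mem_unipK_inv_mul_eq_one_of_ne_last (hn : 0 < n)
    {g : (Matrix (Fin (n + 1)) (Fin (n + 1)) F)ˣ} (hg : g ∈ unipGroup n F) :
    ∃ k ∈ unipK n F ⟨n - 1, by omega⟩,
      IsUnitriangular (↑(k⁻¹ * g) : Matrix (Fin (n + 1)) (Fin (n + 1)) F) ∧
      ∀ r c, c ≠ Fin.last n → (↑(k⁻¹ * g) : Matrix (Fin (n + 1)) (Fin (n + 1)) F) r c =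
        (1 : Matrix (Fin (n + 1)) (Fin (n + 1)) F) r c := by
  have hgU : IsUnitriangular (g : Matrix (Fin (n + 1)) (Fin (n + 1)) F) :=
    unipGroup_le_unitriangularGroup hg
  have hkU := hgU.updateCol_single (Fin.last n)
  obtain ⟨k, hkK, hk⟩ := hkU.exists_mem_unipK ⟨n - 1, by omega⟩ fun i j hi hj => by
    obtain rfl : j = Fin.last n := Fin.ext (by simp [Fin.le_def] at hj; rw [Fin.val_last]; omega)
    have hi : i ≠ Fin.last n := fun h => by rw [h, Fin.le_def] at hi; simp at hi; omega
    simp [hi]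
  refine ⟨k, hkK, (unitriangularGroup _ F).mul_mem (inv_mem (hk ▸ hkU : IsUnitriangular _)) hgU,
    fun r c hc => coe_inv_mul_apply_of_forall_apply_eq (fun r => by rw [hk, updateCol_ne hc]) r⟩

theorem exists_mem_unipK_zero_eq_transvection_mul (hn : 0 < n)
    {E : (Matrix (Fin (n + 1)) (Fin (n + 1)) F)ˣ}
    (hE : IsUnitriangular (E : Matrix (Fin (n + 1)) (Fin (n + 1)) F))
    (hcol : ∀ r c, c ≠ Fin.last n → (E : Matrix (Fin (n + 1)) (Fin (n + 1)) F) r c =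
      (1 : Matrix (Fin (n + 1)) (Fin (n + 1)) F) r c) :
    ∃ x ∈ unipK n F ⟨0, hn⟩, (x : Matrix (Fin (n + 1)) (Fin (n + 1)) F) =
      transvection 0 (Fin.last n) (-(E : Matrix (Fin (n + 1)) (Fin (n + 1)) F) 0 (Fin.last n)) *
        E := by
  have h0l : (0 : Fin (n + 1)) < Fin.last n := Fin.lt_def.2 (by simpa using hn)
  refine ((isUnitriangular_transvection h0l _).mul hE).exists_mem_unipK _ fun i j hi hj => ?_
  obtain rfl : i = 0 := Fin.ext (by simpa [Fin.le_def] using hi)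
  have hj0 : j ≠ 0 := fun h => by simp [h] at hj
  rw [transvection_mul_apply_same]
  by_cases hjl : j = Fin.last n
  · subst hjl; rw [hE.2]; ring
  · rw [hcol _ _ hjl, hcol _ _ hjl, one_apply_ne hj0.symm, one_apply_ne (Ne.symm hjl)]; ring

end Unipotent

theorem stmt12 (n : ℕ) (hn : 2 ≤ n) (F : Type) [Field F] :
    ∀ g ∈ unipGroup n F, ∃ gs : List (Matrix (Fin (n + 1)) (Fin (n + 1)) F)ˣ,
      gs.length ≤ 6 ∧
      (∀ x ∈ gs, x ∈ unipK n F ⟨0, by omega⟩ ∨ x ∈ unipK n F ⟨n - 1, by omega⟩) ∧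
      gs.prod = g := by
  intro g hg
  have h01 : (0 : Fin (n + 1)) < ⟨1, by omega⟩ := Fin.lt_def.2 (by simp)
  have h1l : (⟨1, by omega⟩ : Fin (n + 1)) < Fin.last n := Fin.lt_def.2 (by simp; omega)
  have h0l : (0 : Fin (n + 1)) < Fin.last n := h01.trans h1l
  have hK0 : ∀ b : F, transvectionUnit h1l.ne b ∈ unipK n F ⟨0, by omega⟩ := fun b =>
    transvectionUnit_mem_unipK _ h1l (fun h => by simp [Fin.le_def] at h) b
  have hKl : ∀ b : F, transvectionUnit h01.ne b ∈ unipK n F ⟨n - 1, by omega⟩ := fun b =>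
    transvectionUnit_mem_unipK _ h01 (fun h => by simp [Fin.le_def] at h; omega) b
  obtain ⟨k, hkK, hEU, hEcol⟩ := exists_mem_unipK_inv_mul_eq_one_of_ne_last (by omega) hg
  set c := (↑(k⁻¹ * g) : Matrix (Fin (n + 1)) (Fin (n + 1)) F) 0 (Fin.last n)
  obtain ⟨x, hxK, hx⟩ := exists_mem_unipK_zero_eq_transvection_mul (by omega) hEU hEcol
  have hxE : x = transvectionUnit h0l.ne (-c) * (k⁻¹ * g) := Units.ext hx
  have hcomm :
      ⁅transvectionUnit h01.ne c, transvectionUnit h1l.ne 1⁆ = transvectionUnit h0l.ne c := by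
    rw [commutatorElement_transvectionUnit h01.ne h1l.ne h0l.ne, mul_one]
  refine ⟨[k, transvectionUnit h01.ne c, transvectionUnit h1l.ne 1,
    transvectionUnit h01.ne (-c), transvectionUnit h1l.ne (-1), x], le_rfl, ?_, ?_⟩
  · simp only [List.forall_mem_cons, List.not_mem_nil, IsEmpty.forall_iff, implies_true, and_true]
    exact ⟨.inr hkK, .inr (hKl c), .inl (hK0 1), .inr (hKl (-c)), .inl (hK0 (-1)), .inl hxK⟩
  · simp only [List.prod_cons, List.prod_nil, mul_one, hxE, ← inv_transvectionUnit, ← hcomm,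
      commutatorElement_def]
    group
end
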